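/- arXiv:2006.07697 — 4 statements merged into one kernel-verified Lean document; each statement's English description precedes it below -/
import Mathlib

section
/- Let H be an M×n real matrix, W an M×M real matrix, and suppose HᵀWH is invertible. Define the weighted least-squares state estimate θ̂(z) = (HᵀWH)⁻¹HᵀW z and the bad-data residual r(z) = ‖z − H θ̂(z)‖ (Euclidean norm). Then for any measurement vector z ∈ ℝᴹ and any c ∈ ℝⁿ, the false data injection attack a = Hc leaves the residual unchanged: r(z + Hc) = r(z). -/
open Matrix

/-!
The weighted least-squares estimator is a linear left inverse `L = (HᵀWH)⁻¹HᵀW` of `H`, so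
shifting `z` by `H c` shifts the estimate by exactly `c`, and the fitted residual
`z - H (L z)` does not move.
-/

section LeftInverse

variable {R m n : Type*} [CommRing R] [Fintype m] [Fintype n] [DecidableEq n]

theorem mulVec_add_mulVec_of_mul_eq_one {L : Matrix n m R} {H : Matrix m n R} (hLH : L * H = 1)
    (z : m → R) (c : n → R) : L *ᵥ (z + H *ᵥ c) = L *ᵥ z + c := by
  rw [mulVec_add, mulVec_mulVec, hLH, one_mulVec]

theorem sub_mulVec_mulVec_add_mulVec_of_mul_eq_one {L : Matrix n m R} {H : Matrix m n R}
    (hLH : L * H = 1) (z : m → R) (c : n → R) :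
    z + H *ᵥ c - H *ᵥ (L *ᵥ (z + H *ᵥ c)) = z - H *ᵥ (L *ᵥ z) := by
  rw [mulVec_add_mulVec_of_mul_eq_one hLH, mulVec_add]
  abel

theorem inv_mul_mul_eq_one_of_isUnit_det {A : Matrix n m R} {H : Matrix m n R}
    (h : IsUnit (A * H).det) : (A * H)⁻¹ * A * H = 1 := by
  rw [Matrix.mul_assoc, nonsing_inv_mul _ h]

end LeftInverse

/-- An FDI attack of the form `a = H c` leaves the BDD residual unchanged. -/
theorem fdi_attack_residual_invariant
    (M n : ℕ) (H : Matrix (Fin M) (Fin n) ℝ) (W : Matrix (Fin M) (Fin M) ℝ)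
    (hinv : IsUnit (Hᵀ * W * H).det)
    (est : (Fin M → ℝ) → (Fin n → ℝ))
    (hest : ∀ z, est z = (Hᵀ * W * H)⁻¹ *ᵥ (Hᵀ *ᵥ (W *ᵥ z)))
    (r : (Fin M → ℝ) → ℝ)
    (hr : ∀ z, r z = ‖(EuclideanSpace.equiv (Fin M) ℝ).symm (z - H *ᵥ est z)‖) :
    ∀ (z : Fin M → ℝ) (c : Fin n → ℝ), r (z + H *ᵥ c) = r z := by
  intro z c
  have hest_L : ∀ z, est z = ((Hᵀ * W * H)⁻¹ * (Hᵀ * W)) *ᵥ z := fun z => by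
    rw [hest, ← mulVec_mulVec, ← mulVec_mulVec]
  have hLH : (Hᵀ * W * H)⁻¹ * (Hᵀ * W) * H = 1 := inv_mul_mul_eq_one_of_isUnit_det hinv
  rw [hr, hr, hest_L, hest_L, sub_mulVec_mulVec_add_mulVec_of_mul_eq_one hLH]
end

section
/- Let H be an M×n real matrix, W an M×M real matrix with HᵀWH invertible, and let r(z) = ‖z − H(HᵀWH)⁻¹HᵀW z‖ be the BDD residual. Fix a state θ ∈ ℝⁿ, a threshold τ > 0, and let μ be any probability measure on ℝᴹ modeling the sensor noise n. Then for every c ∈ ℝⁿ, the detection probability of the attack a = Hc equals the false positive rate: μ{n : r(Hθ + n + Hc) > τ} = μ{n : r(Hθ + n) > τ}. -/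
open Matrix

section WeightedLeastSquares

variable {m n R : Type*} [Fintype m] [Fintype n] [DecidableEq n] [CommRing R]

theorem wls_estimate_add_mulVec (H : Matrix m n R) (W : Matrix m m R)
    (hinv : IsUnit (Hᵀ * W * H).det) (z : m → R) (c : n → R) :
    (Hᵀ * W * H)⁻¹ *ᵥ (Hᵀ *ᵥ (W *ᵥ (z + H *ᵥ c))) =
      (Hᵀ * W * H)⁻¹ *ᵥ (Hᵀ *ᵥ (W *ᵥ z)) + c := by
  have hnormal : Hᵀ *ᵥ (W *ᵥ (z + H *ᵥ c)) = Hᵀ *ᵥ (W *ᵥ z) + (Hᵀ * W * H) *ᵥ c := by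
    simp only [mulVec_add, mulVec_mulVec, Matrix.mul_assoc]
  rw [hnormal, mulVec_add, mulVec_mulVec c, nonsing_inv_mul _ hinv, one_mulVec]

theorem wls_residual_add_mulVec (H : Matrix m n R) (W : Matrix m m R)
    (hinv : IsUnit (Hᵀ * W * H).det) (z : m → R) (c : n → R) :
    z + H *ᵥ c - H *ᵥ ((Hᵀ * W * H)⁻¹ *ᵥ (Hᵀ *ᵥ (W *ᵥ (z + H *ᵥ c)))) =
      z - H *ᵥ ((Hᵀ * W * H)⁻¹ *ᵥ (Hᵀ *ᵥ (W *ᵥ z))) := by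
  rw [wls_estimate_add_mulVec H W hinv, mulVec_add]
  abel

end WeightedLeastSquares

theorem fdi_attack_detection_prob_eq_false_positive_rate_general
    (M n : ℕ) (H : Matrix (Fin M) (Fin n) ℝ) (W : Matrix (Fin M) (Fin M) ℝ)
    (hinv : IsUnit (Hᵀ * W * H).det)
    (r : (Fin M → ℝ) → ℝ)
    (hr : ∀ z, r z = ‖(EuclideanSpace.equiv (Fin M) ℝ).symm
        (z - H *ᵥ ((Hᵀ * W * H)⁻¹ *ᵥ (Hᵀ *ᵥ (W *ᵥ z))))‖)
    (θ : Fin n → ℝ) (τ : ℝ)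
    (μ : MeasureTheory.Measure (Fin M → ℝ)) :
    ∀ c : Fin n → ℝ,
      μ {nv : Fin M → ℝ | r (H *ᵥ θ + nv + H *ᵥ c) > τ} =
      μ {nv : Fin M → ℝ | r (H *ᵥ θ + nv) > τ} := by
  intro c
  have hshift : ∀ z, r (z + H *ᵥ c) = r z := fun z => by
    rw [hr, hr, wls_residual_add_mulVec H W hinv]
  simp only [hshift]

/-- For noise distributed according to a probability measure `μ`, the detection
probability of an undetectable FDI attack `a = H c` equals the false positive rate. -/
theorem fdi_attack_detection_prob_eq_false_positive_rate
    (M n : ℕ) (H : Matrix (Fin M) (Fin n) ℝ) (W : Matrix (Fin M) (Fin M) ℝ)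
    (hinv : IsUnit (Hᵀ * W * H).det)
    (r : (Fin M → ℝ) → ℝ)
    (hr : ∀ z, r z = ‖(EuclideanSpace.equiv (Fin M) ℝ).symm
        (z - H *ᵥ ((Hᵀ * W * H)⁻¹ *ᵥ (Hᵀ *ᵥ (W *ᵥ z))))‖)
    (θ : Fin n → ℝ) (τ : ℝ) (hτ : 0 < τ)
    (μ : MeasureTheory.Measure (Fin M → ℝ)) [MeasureTheory.IsProbabilityMeasure μ] :
    ∀ c : Fin n → ℝ,
      μ {nv : Fin M → ℝ | r (H *ᵥ θ + nv + H *ᵥ c) > τ} =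
      μ {nv : Fin M → ℝ | r (H *ᵥ θ + nv) > τ} :=
  fdi_attack_detection_prob_eq_false_positive_rate_general M n H W hinv r hr θ τ μ
end

section
/- Every finite two-player zero-sum game has a mixed-strategy Nash equilibrium: for any real matrix A of size m×n, there exist probability vectors p* ∈ Δ_m and q* ∈ Δ_n such that for all p ∈ Δ_m and q ∈ Δ_n, u(p, q*) ≤ u(p*, q*) ≤ u(p*, q), where u(p,q) = Σ_{i,j} p_i A_{ij} q_j. -/
/-!
The payoff `(p, q) ↦ p ⬝ᵥ A *ᵥ q` is bilinear, hence continuous and both convex and concave in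
each variable, and the simplices of mixed strategies are nonempty, compact and convex. Sion's
minimax theorem therefore yields a saddle point of the mixed extension: von Neumann's theorem.
-/

open Matrix

theorem LinearMap.exists_isSaddlePointOn {E F : Type*}
    [TopologicalSpace E] [AddCommGroup E] [Module ℝ E] [IsTopologicalAddGroup E]
    [ContinuousSMul ℝ E]
    [TopologicalSpace F] [AddCommGroup F] [Module ℝ F] [IsTopologicalAddGroup F]
    [ContinuousSMul ℝ F]
    (B : E →ₗ[ℝ] F →ₗ[ℝ] ℝ) (hB_left : ∀ y, Continuous (B.flip y))
    (hB_right : ∀ x, Continuous (B x)) {X : Set E} {Y : Set F}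
    (neX : X.Nonempty) (cX : Convex ℝ X) (kX : IsCompact X)
    (neY : Y.Nonempty) (cY : Convex ℝ Y) (kY : IsCompact Y) :
    ∃ a ∈ X, ∃ b ∈ Y, IsSaddlePointOn X Y (fun x y ↦ B x y) a b :=
  Sion.exists_isSaddlePointOn neX cX kX
    (fun y _ ↦ (hB_left y).lowerSemicontinuous.lowerSemicontinuousOn X)
    (fun y _ ↦ (B.flip y).convexOn cX |>.quasiconvexOn) cY neY kY
    (fun x _ ↦ (hB_right x).upperSemicontinuous.upperSemicontinuousOn Y)
    (fun x _ ↦ (B x).concaveOn cY |>.quasiconcaveOn)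

/-- `IsSaddlePointOn` puts the minimizing player first, so here the column strategy `q` comes
before the row strategy `p`. -/
theorem Matrix.exists_isSaddlePointOn_stdSimplex {ι κ : Type*} [Fintype ι] [Fintype κ]
    [Nonempty ι] [Nonempty κ] (A : Matrix ι κ ℝ) :
    ∃ q ∈ stdSimplex ℝ κ, ∃ p ∈ stdSimplex ℝ ι,
      IsSaddlePointOn (stdSimplex ℝ κ) (stdSimplex ℝ ι) (fun q p ↦ p ⬝ᵥ A *ᵥ q) q p := by
  classical
  simpa only [LinearMap.flip_apply, toLinearMap₂'_apply'] using
    (toLinearMap₂' ℝ A).flip.exists_isSaddlePointOn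
    (fun p ↦ LinearMap.continuous_of_finiteDimensional _)
    (fun q ↦ LinearMap.continuous_of_finiteDimensional _)
    .of_subtype (convex_stdSimplex ℝ κ) (isCompact_stdSimplex ℝ κ)
    .of_subtype (convex_stdSimplex ℝ ι) (isCompact_stdSimplex ℝ ι)

/-- Every finite two-player zero-sum game has a mixed-strategy Nash
equilibrium (a saddle point of the mixed extension). -/
theorem zero_sum_game_has_mixed_nash_equilibrium
    (m n : ℕ) (hm : 0 < m) (hn : 0 < n) (A : Matrix (Fin m) (Fin n) ℝ)
    (u : (Fin m → ℝ) → (Fin n → ℝ) → ℝ)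
    (hu : ∀ p q, u p q = ∑ i, ∑ j, p i * A i j * q j) :
    ∃ p ∈ stdSimplex ℝ (Fin m), ∃ q ∈ stdSimplex ℝ (Fin n),
      ∀ p' ∈ stdSimplex ℝ (Fin m), ∀ q' ∈ stdSimplex ℝ (Fin n),
        u p' q ≤ u p q ∧ u p q ≤ u p q' := by
  have : Nonempty (Fin m) := Fin.pos_iff_nonempty.mp hm
  have : Nonempty (Fin n) := Fin.pos_iff_nonempty.mp hn
  have hu' : ∀ p q, u p q = p ⬝ᵥ A *ᵥ q := fun p q ↦ by
    simp only [hu, dotProduct, mulVec, Finset.mul_sum, mul_assoc]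
  obtain ⟨q, hq, p, hp, hsaddle⟩ := A.exists_isSaddlePointOn_stdSimplex
  refine ⟨p, hp, q, hq, fun p' hp' q' hq' ↦ ⟨?_, ?_⟩⟩
  · simpa only [hu'] using hsaddle q hq p' hp'
  · simpa only [hu'] using hsaddle q' hq' p hp
end

section
/- For any real matrix A of size m×n, the minimax equality holds over mixed strategies: sup over p ∈ Δ_m of (inf over q ∈ Δ_n of u(p,q)) = inf over q ∈ Δ_n of (sup over p ∈ Δ_m of u(p,q)), where u(p,q) = Σ_{i,j} p_i A_{ij} q_j; this common value is the value of the zero-sum game. -/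
/-!
Weak duality `sup inf ≤ inf sup` holds for every bounded payoff. Conversely, it suffices that each
level `c` can be secured by one of the players: either some mixed strategy `q` of the column
player has `A q ≤ c` componentwise, or some mixed strategy `p` of the row player has
`p ⬝ A q > c` for all `q`. If the first alternative fails, the compact convex set `A Δₙ` is
disjoint from the closed convex orthant `{y | y ≤ c}`. A separating functional `y ↦ w ⬝ y` is
bounded above on that orthant, hence `w ≥ 0`, and `w / ∑ wᵢ` is the required `p`.
-/

open Set Matrix Function

section Minimax

variable {α β γ : Type*} {f : α → β → γ}

section Lattice

variable [ConditionallyCompleteLattice γ]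

theorem bddBelow_range_of_bddBelow_range_uncurry (h : BddBelow (range (uncurry f))) (a : α) :
    BddBelow (range (f a)) :=
  h.mono (range_subset_iff.2 fun b => mem_range_self (f := uncurry f) (a, b))

theorem bddAbove_range_flip_of_bddAbove_range_uncurry (h : BddAbove (range (uncurry f)))
    (b : β) : BddAbove (range fun a => f a b) :=
  h.mono (range_subset_iff.2 fun a => mem_range_self (f := uncurry f) (a, b))

theorem bddAbove_range_ciInf [Nonempty β] (hbb : BddBelow (range (uncurry f)))
    (hba : BddAbove (range (uncurry f))) : BddAbove (range fun a => ⨅ b, f a b) := by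
  obtain ⟨M, hM⟩ := hba
  obtain ⟨b⟩ := ‹Nonempty β›
  refine ⟨M, forall_mem_range.2 fun a => ?_⟩
  exact (ciInf_le (bddBelow_range_of_bddBelow_range_uncurry hbb a) b).trans (hM ⟨(a, b), rfl⟩)

theorem bddBelow_range_ciSup [Nonempty α] (hbb : BddBelow (range (uncurry f)))
    (hba : BddAbove (range (uncurry f))) : BddBelow (range fun b => ⨆ a, f a b) := by
  obtain ⟨M, hM⟩ := hbb
  obtain ⟨a⟩ := ‹Nonempty α›
  refine ⟨M, forall_mem_range.2 fun b => ?_⟩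
  exact (hM ⟨(a, b), rfl⟩).trans
    (le_ciSup (bddAbove_range_flip_of_bddAbove_range_uncurry hba b) a)

theorem ciSup_ciInf_le_ciInf_ciSup [Nonempty α] [Nonempty β]
    (hbb : BddBelow (range (uncurry f))) (hba : BddAbove (range (uncurry f))) :
    ⨆ a, ⨅ b, f a b ≤ ⨅ b, ⨆ a, f a b :=
  le_ciInf fun b => ciSup_le fun a =>
    (ciInf_le (bddBelow_range_of_bddBelow_range_uncurry hbb a) b).trans
      (le_ciSup (bddAbove_range_flip_of_bddAbove_range_uncurry hba b) a)

end Lattice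

theorem ciSup_ciInf_eq_ciInf_ciSup_of_forall_or [ConditionallyCompleteLinearOrder γ]
    [DenselyOrdered γ] [Nonempty α] [Nonempty β]
    (hbb : BddBelow (range (uncurry f))) (hba : BddAbove (range (uncurry f)))
    (h : ∀ c, (∃ b, ∀ a, f a b ≤ c) ∨ ∃ a, ∀ b, c ≤ f a b) :
    ⨆ a, ⨅ b, f a b = ⨅ b, ⨆ a, f a b := by
  refine le_antisymm (ciSup_ciInf_le_ciInf_ciSup hbb hba)
    (le_of_forall_gt_imp_ge_of_dense fun c hc => ?_)
  rcases h c with ⟨b, hb⟩ | ⟨a, ha⟩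
  · exact (ciInf_le (bddBelow_range_ciSup hbb hba) b).trans (ciSup_le hb)
  · exact absurd hc (not_lt.2 ((le_ciInf ha).trans (le_ciSup (bddAbove_range_ciInf hbb hba) a)))

end Minimax

section Simplex

variable {ι κ : Type*} [Fintype ι] [Fintype κ]

theorem dotProduct_const_of_mem_stdSimplex {p : ι → ℝ} (hp : p ∈ stdSimplex ℝ ι) (c : ℝ) :
    p ⬝ᵥ (fun _ => c) = c := by
  simp [dotProduct, ← Finset.sum_mul, hp.2]

theorem dotProduct_le_of_mem_stdSimplex {p x : ι → ℝ} {c : ℝ} (hp : p ∈ stdSimplex ℝ ι)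
    (hx : x ≤ fun _ => c) : p ⬝ᵥ x ≤ c :=
  (dotProduct_le_dotProduct_of_nonneg_left hx hp.1).trans_eq
    (dotProduct_const_of_mem_stdSimplex hp c)

theorem inv_sum_smul_mem_stdSimplex {w : ι → ℝ} (hw : 0 ≤ w) (hs : ∑ i, w i ≠ 0) :
    (∑ i, w i)⁻¹ • w ∈ stdSimplex ℝ ι :=
  ⟨fun i => smul_nonneg (inv_nonneg.2 (Finset.sum_nonneg fun j _ => hw j)) (hw i), by
    simp [← Finset.mul_sum, hs]⟩

theorem nonneg_of_bddAbove_dotProduct_Iic {w x : ι → ℝ} (h : BddAbove ((w ⬝ᵥ ·) '' Iic x)) :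
    0 ≤ w := by
  classical
  obtain ⟨M, hM⟩ := h
  intro i
  by_contra! hi
  have hx : w ⬝ᵥ x ≤ M := hM ⟨x, mem_Iic.2 le_rfl, rfl⟩
  -- chosen so that `w ⬝ᵥ (x - t • Pi.single i 1) = M + 1`
  set t := (w ⬝ᵥ x - M - 1) / w i
  have ht : 0 ≤ t := div_nonneg_of_nonpos (by linarith) hi.le
  have hy : x - t • Pi.single i 1 ≤ x :=
    sub_le_self _ (smul_nonneg ht (Pi.single_nonneg.2 zero_le_one))
  have := hM ⟨_, hy, rfl⟩
  simp only [dotProduct_sub, dotProduct_smul, dotProduct_single_one, smul_eq_mul] at this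
  rw [div_mul_cancel₀ _ hi.ne] at this
  linarith

theorem exists_mulVec_le_or_exists_lt_dotProduct_mulVec [Nonempty κ] (A : Matrix ι κ ℝ)
    (c : ℝ) :
    (∃ q ∈ stdSimplex ℝ κ, A *ᵥ q ≤ fun _ => c) ∨
      ∃ p ∈ stdSimplex ℝ ι, ∀ q ∈ stdSimplex ℝ κ, c < p ⬝ᵥ (A *ᵥ q) := by
  classical
  refine or_iff_not_imp_left.2 fun hnot => ?_
  have hdisj : Disjoint (Iic fun _ => c) (A.mulVecLin '' stdSimplex ℝ κ) := by
    rw [disjoint_right]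
    rintro _ ⟨q, hq, rfl⟩ hle
    exact hnot ⟨q, hq, hle⟩
  obtain ⟨f, u, v, hfO, huv, hfK⟩ := geometric_hahn_banach_closed_compact (convex_Iic _)
    isClosed_Iic ((convex_stdSimplex ℝ κ).linear_image _)
    ((isCompact_stdSimplex ℝ κ).image A.mulVecLin.continuous_of_finiteDimensional) hdisj
  set w := (dotProductEquiv ℝ ι).symm f.toLinearMap
  have hf : ∀ y, f y = w ⬝ᵥ y := fun y =>
    (LinearMap.congr_fun ((dotProductEquiv ℝ ι).apply_symm_apply f.toLinearMap) y).symm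
  have hw : 0 ≤ w := nonneg_of_bddAbove_dotProduct_Iic ⟨u, by
    rintro _ ⟨y, hy, rfl⟩
    exact (hf y ▸ hfO y hy).le⟩
  have hlt : ∀ q ∈ stdSimplex ℝ κ, w ⬝ᵥ (fun _ => c) < w ⬝ᵥ (A *ᵥ q) := fun q hq => by
    have h1 := hfO _ (le_refl (fun _ : ι => c))
    have h2 := hfK _ ⟨q, hq, rfl⟩
    rw [hf] at h1 h2
    exact h1.trans (huv.trans h2)
  have hs : ∑ i, w i ≠ 0 := by
    intro hs
    have hw0 : w = 0 := funext fun i =>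
      (Finset.sum_eq_zero_iff_of_nonneg fun j _ => hw j).1 hs i (Finset.mem_univ i)
    obtain ⟨q⟩ := (inferInstance : Nonempty (stdSimplex ℝ κ))
    simpa [hw0] using hlt q q.2
  have hp := inv_sum_smul_mem_stdSimplex hw hs
  refine ⟨_, hp, fun q hq => ?_⟩
  rw [← dotProduct_const_of_mem_stdSimplex hp c, smul_dotProduct, smul_dotProduct]
  exact smul_lt_smul_of_pos_left (hlt q hq)
    (inv_pos.2 ((Finset.sum_nonneg fun j _ => hw j).lt_of_ne' hs))

theorem ciSup_ciInf_dotProduct_mulVec_eq_ciInf_ciSup [Nonempty ι] [Nonempty κ]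
    (A : Matrix ι κ ℝ) :
    ⨆ p : stdSimplex ℝ ι, ⨅ q : stdSimplex ℝ κ, ⇑p ⬝ᵥ (A *ᵥ ⇑q) =
      ⨅ q : stdSimplex ℝ κ, ⨆ p : stdSimplex ℝ ι, ⇑p ⬝ᵥ (A *ᵥ ⇑q) := by
  have hcompact : IsCompact (range (uncurry fun (p : stdSimplex ℝ ι) (q : stdSimplex ℝ κ) =>
      ⇑p ⬝ᵥ (A *ᵥ ⇑q))) :=
    isCompact_range (by fun_prop)
  refine ciSup_ciInf_eq_ciInf_ciSup_of_forall_or hcompact.bddBelow hcompact.bddAbove fun c => ?_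
  rcases exists_mulVec_le_or_exists_lt_dotProduct_mulVec A c with ⟨q, hq, hle⟩ | ⟨p, hp, hlt⟩
  · exact Or.inl ⟨⟨q, hq⟩, fun p => dotProduct_le_of_mem_stdSimplex p.2 hle⟩
  · exact Or.inr ⟨⟨p, hp⟩, fun q => (hlt q q.2).le⟩

end Simplex

/-- The minimax equality for finite two-player zero-sum games over mixed
strategies: `sup_p inf_q u(p,q) = inf_q sup_p u(p,q)`; the common value is the value of
the game. -/
theorem zero_sum_game_minimax_equality
    (m n : ℕ) (hm : 0 < m) (hn : 0 < n) (A : Matrix (Fin m) (Fin n) ℝ)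
    (u : (Fin m → ℝ) → (Fin n → ℝ) → ℝ)
    (hu : ∀ p q, u p q = ∑ i, ∑ j, p i * A i j * q j) :
    (⨆ p : stdSimplex ℝ (Fin m), ⨅ q : stdSimplex ℝ (Fin n), u p q) =
      ⨅ q : stdSimplex ℝ (Fin n), ⨆ p : stdSimplex ℝ (Fin m), u p q := by
  have : Nonempty (Fin m) := ⟨⟨0, hm⟩⟩
  have : Nonempty (Fin n) := ⟨⟨0, hn⟩⟩
  obtain rfl : u = fun p q => p ⬝ᵥ (A *ᵥ q) := by
    ext p q
    simp [hu, dotProduct, mulVec, Finset.mul_sum, mul_assoc]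
  exact ciSup_ciInf_dotProduct_mulVec_eq_ciInf_ciSup A
end
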